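/- arXiv:2601.22193 — 4 statements merged into one kernel-verified Lean document; each statement's English description precedes it below -/
import Mathlib

section
/- Let H and P be phylogenetic trees, let σ be a map from the leaves of P to the leaves of H, and let φ be a reconciliation of (H,P,σ). If φ is strongly acyclic (i.e., G^φ contains no directed cycle containing at least one strict arc), then φ is acyclic (i.e., D^φ contains no directed cycle). -/
/-- A phylogenetic tree: a finite rooted full binary tree. Every vertex has a `parent`
(the root being its own parent), iterating `parent` from any vertex reaches the root,
and every vertex has either `0` or `2` children. -/
structure PhyloTree (V : Type*) [Fintype V] [DecidableEq V] where
  root : V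
  parent : V → V
  parent_root : parent root = root
  toRoot : ∀ v : V, ∃ n : ℕ, parent^[n] v = root
  binary : ∀ v : V,
      (Finset.univ.filter fun w => parent w = v ∧ w ≠ root).card = 0 ∨
      (Finset.univ.filter fun w => parent w = v ∧ w ≠ root).card = 2

namespace PhyloTree

variable {V : Type*} [Fintype V] [DecidableEq V]

/-- `T.ParentArc a b` : `a` is the parent of `b`; these are the arcs of the tree
(the strict arcs, forming the set `A_par`). -/
def ParentArc (T : PhyloTree V) (a b : V) : Prop :=
  T.parent b = a ∧ b ≠ T.root

/-- `T.Anc a b` : `a` is an ancestor of `b`, equivalently `b` is a descendant of `a`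
(this includes the case `a = b`). -/
def Anc (T : PhyloTree V) (a b : V) : Prop :=
  ∃ n : ℕ, T.parent^[n] b = a

/-- `a` and `b` are incomparable: neither is an ancestor of the other. -/
def Incomp (T : PhyloTree V) (a b : V) : Prop :=
  ¬ T.Anc a b ∧ ¬ T.Anc b a

/-- `a` and `b` are siblings: distinct nodes with the same parent. -/
def Sibling (T : PhyloTree V) (a b : V) : Prop :=
  a ≠ b ∧ a ≠ T.root ∧ b ≠ T.root ∧ T.parent a = T.parent b

/-- `a` and `b` are cousins: their parents are siblings. -/
def Cousin (T : PhyloTree V) (a b : V) : Prop :=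
  a ≠ T.root ∧ b ≠ T.root ∧ T.Sibling (T.parent a) (T.parent b)

/-- A leaf: a node with no children. -/
def IsLeaf (T : PhyloTree V) (a : V) : Prop := ∀ b, ¬ T.ParentArc a b

theorem parentArc_irrefl (T : PhyloTree V) (a : V) : ¬ T.ParentArc a a := by
  rintro ⟨h, hr⟩
  obtain ⟨n, hn⟩ := T.toRoot a
  exact hr ((Function.iterate_fixed h n).symm.trans hn)

/-- The underlying undirected graph of the tree. -/
def ugraph (T : PhyloTree V) : SimpleGraph V where
  Adj a b := T.ParentArc a b ∨ T.ParentArc b a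
  symm := ⟨fun _ _ h => h.symm⟩
  loopless := ⟨fun a h => by
    rcases h with h | h <;> exact T.parentArc_irrefl a h⟩

/-- `T.dist a b` : the number of edges on the unique undirected path between `a` and `b`. -/
noncomputable def dist (T : PhyloTree V) (a b : V) : ℕ := T.ugraph.dist a b

/-- `T.IsLCA c a b` : `c` is the lowest common ancestor of `a` and `b`. -/
def IsLCA (T : PhyloTree V) (c a b : V) : Prop :=
  T.Anc c a ∧ T.Anc c b ∧ ∀ d, T.Anc d a → T.Anc d b → T.Anc d c

/-- The level of a node: `-dist(v, root)`, so nodes closer to the root have higher level. -/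
noncomputable def level (T : PhyloTree V) (v : V) : ℤ := -(T.dist v T.root : ℤ)

/-- Arc `(a,b)` of the digraph `H⁺_d`: either a parent-to-child arc of the tree, or an
arc between distinct incomparable vertices at distance at most `d`. -/
def HplusArc (T : PhyloTree V) (d : ℕ) (a b : V) : Prop :=
  T.ParentArc a b ∨ (a ≠ b ∧ T.Incomp a b ∧ T.dist a b ≤ d)

/-- `(a,b) ∈ A_sib` : arcs (in both directions) between siblings. -/
def SibArc (T : PhyloTree V) (a b : V) : Prop := T.Sibling a b

/-- `(a,b) ∈ A_nep` : arcs (in both directions) between a node and a child of its sibling. -/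
def NepArc (T : PhyloTree V) (a b : V) : Prop :=
  (∃ s, T.Sibling s b ∧ T.ParentArc s a) ∨ (∃ s, T.Sibling s a ∧ T.ParentArc s b)

/-- `(a,b) ∈ A_gnep` : arcs (in both directions) between a node and a grandchild of its
sibling. -/
def GnepArc (T : PhyloTree V) (a b : V) : Prop :=
  (∃ s c, T.Sibling s b ∧ T.ParentArc s c ∧ T.ParentArc c a) ∨
  (∃ s c, T.Sibling s a ∧ T.ParentArc s c ∧ T.ParentArc c b)

/-- `(a,b) ∈ A_cos` : arcs (in both directions) between cousins. -/
def CosArc (T : PhyloTree V) (a b : V) : Prop := T.Cousin a b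

end PhyloTree

/-- A directed cycle in the digraph with arc relation `G`, represented as an injective
cyclic sequence `f` of `n ≥ 2` vertices in which every consecutive arc is present. -/
def IsDicycle {α : Type*} (G : α → α → Prop) {n : ℕ} (f : ZMod n → α) : Prop :=
  2 ≤ n ∧ Function.Injective f ∧ ∀ i, G (f i) (f (i + 1))

/-- There is a directed path from `s` to `t` in the digraph `G` containing at least one
strict arc (i.e. parent-to-child arc of the tree `T`); here strict arcs of the graphs we
consider are always arcs of `G`. -/
def StrictReach {V : Type*} [Fintype V] [DecidableEq V] (T : PhyloTree V)
    (G : V → V → Prop) (s t : V) : Prop :=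
  ∃ a b, Relation.ReflTransGen G s a ∧ T.ParentArc a b ∧ Relation.ReflTransGen G b t

section Reconciliation

variable {VH VP : Type*} [Fintype VH] [DecidableEq VH] [Fintype VP] [DecidableEq VP]

/-- Host-switch event: one of the children's images is incomparable to `hp`, the other is
a descendant of `hp`. -/
def SwitchEvent (TH : PhyloTree VH) (hp h1 h2 : VH) : Prop :=
  (TH.Incomp h1 hp ∧ TH.Anc hp h2) ∨ (TH.Incomp h2 hp ∧ TH.Anc hp h1)

/-- Cospeciation event: the children's images are incomparable with LCA `hp`. -/
def CospEvent (TH : PhyloTree VH) (hp h1 h2 : VH) : Prop :=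
  TH.Incomp h1 h2 ∧ TH.IsLCA hp h1 h2

/-- Duplication event: both children's images are descendants of `hp`, and neither the
host-switch case nor the cospeciation case applies. -/
def DupEvent (TH : PhyloTree VH) (hp h1 h2 : VH) : Prop :=
  TH.Anc hp h1 ∧ TH.Anc hp h2 ∧ ¬ SwitchEvent TH hp h1 h2 ∧ ¬ CospEvent TH hp h1 h2

/-- `φ` is a reconciliation of `(H, P, σ)`: it agrees with `σ` on leaves, and at every
internal node exactly one of the three events (host switch, cospeciation, duplication)
applies. -/
def IsReconciliation (TH : PhyloTree VH) (TP : PhyloTree VP) (σ : VP → VH)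
    (φ : VP → VH) : Prop :=
  (∀ p, TP.IsLeaf p → φ p = σ p) ∧
  ∀ p p1 p2, TP.ParentArc p p1 → TP.ParentArc p p2 → p1 ≠ p2 →
    SwitchEvent TH (φ p) (φ p1) (φ p2) ∨ CospEvent TH (φ p) (φ p1) (φ p2) ∨
      DupEvent TH (φ p) (φ p1) (φ p2)

/-- `(u,v)` is a switching edge of `P` with respect to `φ` : `u` is the parent of `v` in
`P` and `φ u`, `φ v` are incomparable in `H`. -/
def SwitchingEdge (TH : PhyloTree VH) (TP : PhyloTree VP) (φ : VP → VH) (u v : VP) : Prop :=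
  TP.ParentArc u v ∧ TH.Incomp (φ u) (φ v)

/-- Arc `(a,b)` of `G^φ` : either a (strict) parent-to-child arc of `H`, or a (relaxed)
arc coming, in either direction, from a switching edge. -/
def GphiArc (TH : PhyloTree VH) (TP : PhyloTree VP) (φ : VP → VH) (a b : VH) : Prop :=
  TH.ParentArc a b ∨
    ∃ u v, SwitchingEdge TH TP φ u v ∧ ((a = φ u ∧ b = φ v) ∨ (a = φ v ∧ b = φ u))

/-- `φ` is strongly acyclic: no directed cycle of `G^φ` contains a strict arc. -/
def StronglyAcyclic (TH : PhyloTree VH) (TP : PhyloTree VP) (φ : VP → VH) : Prop :=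
  ¬ ∃ (n : ℕ) (f : ZMod n → VH),
      IsDicycle (GphiArc TH TP φ) f ∧ ∃ i, TH.ParentArc (f i) (f (i + 1))

/-- Arc `(a,b)` of `D^φ` : either an arc of `H`, or an arc from the parent of `φ u` or of
`φ v` (when it exists) to `φ u'` or `φ v'`, for switching edges `(u,v)`, `(u',v')` with
`u` an ancestor of `u'` in `P`. -/
def DphiArc (TH : PhyloTree VH) (TP : PhyloTree VP) (φ : VP → VH) (a b : VH) : Prop :=
  TH.ParentArc a b ∨
    ∃ u v u' v', SwitchingEdge TH TP φ u v ∧ SwitchingEdge TH TP φ u' v' ∧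
      TP.Anc u u' ∧
      ((φ u ≠ TH.root ∧ a = TH.parent (φ u)) ∨ (φ v ≠ TH.root ∧ a = TH.parent (φ v))) ∧
      (b = φ u' ∨ b = φ v')

/-- `φ` is acyclic (time-feasible): `D^φ` contains no directed cycle. -/
def Acyclic (TH : PhyloTree VH) (TP : PhyloTree VP) (φ : VP → VH) : Prop :=
  ¬ ∃ (n : ℕ) (f : ZMod n → VH), IsDicycle (DphiArc TH TP φ) f

end Reconciliation

/-- `G` contains no Type 1 cycle `(h_j, h_k, h_{k1})`, where `h_j`, `h_k` are siblings and
`h_{k1}` is a child of `h_k`. -/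
def NoType1 {V : Type*} [Fintype V] [DecidableEq V] (T : PhyloTree V)
    (G : V → V → Prop) : Prop :=
  ¬ ∃ hj hk hk1, T.Sibling hj hk ∧ T.ParentArc hk hk1 ∧
      G hj hk ∧ G hk hk1 ∧ G hk1 hj

/-- `G` contains no Type 2 cycle `(h_j, h_{j1}, h_k, h_{k1})`, where `h_j`, `h_k` are
siblings, `h_{j1}` is a child of `h_j` and `h_{k1}` is a child of `h_k`. -/
def NoType2 {V : Type*} [Fintype V] [DecidableEq V] (T : PhyloTree V)
    (G : V → V → Prop) : Prop :=
  ¬ ∃ hj hj1 hk hk1, T.Sibling hj hk ∧ T.ParentArc hj hj1 ∧ T.ParentArc hk hk1 ∧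
      G hj hj1 ∧ G hj1 hk ∧ G hk hk1 ∧ G hk1 hj

/-- `G` contains no Type 3 cycle `(h_j, h_{k1}, h_{k3}, h_{k2})`, where `h_j`, `h_k` are
siblings, `h_{k1}`, `h_{k2}` are the children of `h_k`, and `h_{k3}` is a child of
`h_{k1}`. -/
def NoType3 {V : Type*} [Fintype V] [DecidableEq V] (T : PhyloTree V)
    (G : V → V → Prop) : Prop :=
  ¬ ∃ hj hk hk1 hk2 hk3, T.Sibling hj hk ∧ hk1 ≠ hk2 ∧
      T.ParentArc hk hk1 ∧ T.ParentArc hk hk2 ∧ T.ParentArc hk1 hk3 ∧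
      G hj hk1 ∧ G hk1 hk3 ∧ G hk3 hk2 ∧ G hk2 hj

variable {VH VP : Type*} [Fintype VH] [DecidableEq VH] [Fintype VP] [DecidableEq VP]

/-!
An arc `a → b` of `D^φ` is realised in `G^φ` by a walk through a strict arc: go down the strict
arc from `p(φ u)` to `φ u` (or from `p(φ v)` to `φ v`, then across the relaxed arc to `φ u`),
follow the images of the `P`-path from `u` to `u'` (each parasite edge maps to a chain of strict
arcs or to a relaxed arc), and possibly cross the relaxed arc from `φ u'` to `φ v'`. A directed
cycle of `D^φ` thus becomes a closed walk of `G^φ` through a strict arc, and shortcutting that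
walk gives a directed cycle of `G^φ` through the same strict arc.
-/

open Relation

theorem exists_nodup_isChain_cons_of_reflTransGen {α : Type*} {G : α → α → Prop} {a b : α}
    (h : ReflTransGen G a b) :
    ∃ l : List α, (a :: l).Nodup ∧ (a :: l).IsChain G ∧
      (a :: l).getLast (List.cons_ne_nil _ _) = b := by
  induction h using ReflTransGen.head_induction_on with
  | refl => exact ⟨[], by simp⟩
  | @head a c hac _ ih =>
    obtain ⟨l, hnd, hchain, hlast⟩ := ih
    by_cases ha : a ∈ c :: l
    · obtain ⟨s, t, hst⟩ := List.append_of_mem ha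
      have hsuf : (a :: t) <:+ c :: l := hst ▸ List.suffix_append s _
      refine ⟨t, hnd.sublist hsuf.sublist, hchain.suffix hsuf, ?_⟩
      rw [← hlast]
      simp [hst, List.getLast_append_of_ne_nil]
    · exact ⟨c :: l, List.nodup_cons.2 ⟨ha, hnd⟩, List.isChain_cons_cons.2 ⟨hac, hchain⟩,
        by simpa using hlast⟩

theorem exists_isDicycle_of_reflTransGen {α : Type*} {G S : α → α → Prop} (hSG : S ≤ G)
    {x y : α} (hxy : S x y) (hne : x ≠ y) (hyx : ReflTransGen G y x) :
    ∃ (n : ℕ) (f : ZMod n → α), IsDicycle G f ∧ ∃ i, S (f i) (f (i + 1)) := by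
  obtain ⟨t, hnd, hchain, hlast⟩ := exists_nodup_isChain_cons_of_reflTransGen hyx
  have hlast' : (y :: t).get (Fin.last t.length) = x := by
    rw [← hlast]; simp [List.getLast_eq_getElem]
  have hwrap : (y :: t).get (Fin.last t.length + 1) = y := by simp
  -- `ZMod (t.length + 1)` is definitionally `Fin (t.length + 1)`, the index type of `y :: t`.
  have hstep : ∀ i : Fin (t.length + 1), G ((y :: t).get i) ((y :: t).get (i + 1)) := by
    intro i
    rcases Fin.eq_castSucc_or_eq_last i with ⟨j, rfl⟩ | rfl
    · rw [Fin.coeSucc_eq_succ]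
      exact List.isChain_iff_getElem.1 hchain j.val (by simp)
    · rw [hlast', hwrap]; exact hSG _ _ hxy
  have hclose : S ((y :: t).get (Fin.last t.length)) ((y :: t).get (Fin.last t.length + 1)) := by
    rw [hlast', hwrap]; exact hxy
  refine ⟨t.length + 1, (y :: t).get, ⟨?_, List.nodup_iff_injective_get.1 hnd, hstep⟩,
    Fin.last _, hclose⟩
  rcases t with _ | ⟨z, t⟩
  · exact absurd (hlast.symm.trans (by simp)) hne
  · simp

theorem reflTransGen_of_forall_apply_add_one {α : Type*} {G : α → α → Prop} {n : ℕ} [NeZero n]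
    {f : ZMod n → α} (hf : ∀ i, G (f i) (f (i + 1))) (i j : ZMod n) :
    ReflTransGen G (f i) (f j) := by
  have hk : ∀ k : ℕ, ReflTransGen G (f i) (f (i + k)) := by
    intro k
    induction k with
    | zero => rw [Nat.cast_zero, add_zero]
    | succ k ih => exact ih.tail (by simpa [add_assoc] using hf (i + k))
  simpa using hk (j - i).val

namespace PhyloTree

variable {V : Type*} [Fintype V] [DecidableEq V] (T : PhyloTree V)

theorem reflTransGen_parentArc_of_anc {a b : V} (h : T.Anc a b) :
    ReflTransGen T.ParentArc a b := by
  obtain ⟨n, rfl⟩ := h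
  induction n generalizing b with
  | zero => exact .refl
  | succ n ih =>
    by_cases hb : b = T.root
    · subst hb
      rw [Function.iterate_fixed T.parent_root]
    · rw [Function.iterate_succ_apply]
      exact (ih (b := T.parent b)).tail ⟨rfl, hb⟩

theorem exists_parentArc_ne {p c : V} (h : T.ParentArc p c) :
    ∃ c', T.ParentArc p c' ∧ c' ≠ c := by
  set children := Finset.univ.filter fun w => T.parent w = p ∧ w ≠ T.root
  have hc : c ∈ children := Finset.mem_filter.2 ⟨Finset.mem_univ _, h⟩
  have htwo : children.card = 2 :=
    (T.binary p).resolve_left (Finset.card_ne_zero_of_mem hc)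
  obtain ⟨c', hc', hne⟩ := Finset.exists_mem_ne (by omega : 1 < children.card) c
  exact ⟨c', (Finset.mem_filter.1 hc').2, hne⟩

end PhyloTree

theorem StrictReach.reflTransGen {V : Type*} [Fintype V] [DecidableEq V] {T : PhyloTree V}
    {G : V → V → Prop} {a b : V} (h : StrictReach T G a b) (hG : T.ParentArc ≤ G) :
    ReflTransGen G a b := by
  obtain ⟨x, y, hax, hxy, hyb⟩ := h
  exact hax.trans (.head (hG _ _ hxy) hyb)

section Reconciliation

variable {TH : PhyloTree VH} {TP : PhyloTree VP} {σ φ : VP → VH}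

theorem IsReconciliation.anc_or_switchingEdge (hφ : IsReconciliation TH TP σ φ) {p c : VP}
    (h : TP.ParentArc p c) : TH.Anc (φ p) (φ c) ∨ SwitchingEdge TH TP φ p c := by
  obtain ⟨c', hc', hne⟩ := TP.exists_parentArc_ne h
  rcases hφ.2 p c c' h hc' hne.symm with (⟨hinc, -⟩ | ⟨-, hanc⟩) | hcosp | hdup
  · exact .inr ⟨h, hinc.2, hinc.1⟩
  · exact .inl hanc
  · exact .inl hcosp.2.1
  · exact .inl hdup.1

theorem IsReconciliation.reflTransGen_gphiArc_of_anc (hφ : IsReconciliation TH TP σ φ)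
    {u u' : VP} (h : TP.Anc u u') : ReflTransGen (GphiArc TH TP φ) (φ u) (φ u') := by
  refine ReflTransGen.lift' φ (fun p c hpc => ?_) _ _ (TP.reflTransGen_parentArc_of_anc h)
  rcases hφ.anc_or_switchingEdge hpc with hanc | hsw
  · exact ReflTransGen.mono (fun _ _ => Or.inl) _ _ (TH.reflTransGen_parentArc_of_anc hanc)
  · exact .single (.inr ⟨p, c, hsw, .inl ⟨rfl, rfl⟩⟩)

theorem IsReconciliation.strictReach_of_dphiArc (hφ : IsReconciliation TH TP σ φ) {a b : VH}
    (h : DphiArc TH TP φ a b) : StrictReach TH (GphiArc TH TP φ) a b := by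
  rcases h with h | ⟨u, v, u', v', huv, hu'v', hanc, ha, hb⟩
  · exact ⟨a, b, .refl, h, .refl⟩
  have huu' := hφ.reflTransGen_gphiArc_of_anc hanc
  have hu'b : ReflTransGen (GphiArc TH TP φ) (φ u') b := by
    rcases hb with rfl | rfl
    · exact .refl
    · exact .single (.inr ⟨u', v', hu'v', .inl ⟨rfl, rfl⟩⟩)
  rcases ha with ⟨hu, rfl⟩ | ⟨hv, rfl⟩
  · exact ⟨_, φ u, .refl, ⟨rfl, hu⟩, huu'.trans hu'b⟩
  · exact ⟨_, φ v, .refl, ⟨rfl, hv⟩, .head (.inr ⟨u, v, huv, .inr ⟨rfl, rfl⟩⟩) (huu'.trans hu'b)⟩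

end Reconciliation

theorem strongly_acyclic_implies_acyclic_general
    (TH : PhyloTree VH) (TP : PhyloTree VP) (σ : VP → VH)
    (φ : VP → VH) (hφ : IsReconciliation TH TP σ φ)
    (hsa : StronglyAcyclic TH TP φ) :
    Acyclic TH TP φ := by
  rintro ⟨n, f, hn, -, hD⟩
  have : NeZero n := ⟨by omega⟩
  have hstrict : TH.ParentArc ≤ GphiArc TH TP φ := fun _ _ => Or.inl
  have hback : ReflTransGen (GphiArc TH TP φ) (f (0 + 1)) (f 0) :=
    reflTransGen_closed (fun _ _ h => (hφ.strictReach_of_dphiArc h).reflTransGen hstrict) _ _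
      (reflTransGen_of_forall_apply_add_one hD _ _)
  obtain ⟨x, y, h0x, hxy, hy1⟩ := hφ.strictReach_of_dphiArc (hD 0)
  exact hsa (exists_isDicycle_of_reflTransGen hstrict hxy
    (fun h => TH.parentArc_irrefl x (h ▸ hxy)) (hy1.trans (hback.trans h0x)))

/-- If a reconciliation `φ` of `(H, P, σ)` is strongly acyclic
(no directed cycle of `G^φ` contains a strict arc), then it is acyclic
(`D^φ` contains no directed cycle). -/
theorem strongly_acyclic_implies_acyclic
    (TH : PhyloTree VH) (TP : PhyloTree VP) (σ : VP → VH)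
    (hσ : ∀ p, TP.IsLeaf p → TH.IsLeaf (σ p))
    (φ : VP → VH) (hφ : IsReconciliation TH TP σ φ)
    (hsa : StronglyAcyclic TH TP φ) :
    Acyclic TH TP φ :=
  strongly_acyclic_implies_acyclic_general TH TP σ φ hφ hsa
end

section
/- Let H and P be phylogenetic trees, let σ be a map from the leaves of P to the leaves of H, and let φ be a reconciliation of (H,P,σ). For all nodes x and y of P, if x is an ancestor of y in P, then G^φ contains a directed path from φ(x) to φ(y). -/
variable {VH VP : Type*} [Fintype VH] [DecidableEq VH] [Fintype VP] [DecidableEq VP]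

namespace PhyloTree

variable {V : Type*} [Fintype V] [DecidableEq V]

theorem Anc.reflTransGen_parentArc {T : PhyloTree V} {a b : V} (h : T.Anc a b) :
    Relation.ReflTransGen T.ParentArc a b := by
  obtain ⟨n, hn⟩ := h
  induction n generalizing b with
  | zero => exact hn ▸ .refl
  | succ n ih =>
    by_cases hb : b = T.root
    · subst hb
      rw [Function.iterate_fixed T.parent_root] at hn
      exact hn ▸ .refl
    · rw [Function.iterate_succ_apply] at hn
      exact (ih hn).tail ⟨rfl, hb⟩

theorem ParentArc.exists_sibling {T : PhyloTree V} {u v : V} (h : T.ParentArc u v) :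
    ∃ w, T.ParentArc u w ∧ w ≠ v := by
  set children := Finset.univ.filter fun w => T.parent w = u ∧ w ≠ T.root
  have hv : v ∈ children := by simp [children, h.1, h.2]
  have htwo : children.card = 2 := (T.binary u).resolve_left (Finset.card_ne_zero_of_mem hv)
  obtain ⟨w, hw, hwv⟩ := Finset.exists_mem_ne (by omega : 1 < children.card) v
  simp only [children, Finset.mem_filter] at hw
  exact ⟨w, hw.2, hwv⟩

end PhyloTree

/-- In each of the three events the image of a child is a descendant of the image of its
parent, except for the switching child of a host switch. -/
theorem IsReconciliation.anc_or_incomp_of_parentArc {TH : PhyloTree VH} {TP : PhyloTree VP}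
    {σ φ : VP → VH} (hφ : IsReconciliation TH TP σ φ) {u v : VP} (huv : TP.ParentArc u v) :
    TH.Anc (φ u) (φ v) ∨ TH.Incomp (φ v) (φ u) := by
  obtain ⟨w, huw, hwv⟩ := huv.exists_sibling
  rcases hφ.2 u v w huv huw hwv.symm with
    (⟨hswitch, _⟩ | ⟨_, hdesc⟩) | ⟨_, hlca⟩ | ⟨hdesc, _⟩
  · exact .inr hswitch
  · exact .inl hdesc
  · exact .inl hlca.1
  · exact .inl hdesc

theorem IsReconciliation.reflTransGen_gphiArc_of_parentArc {TH : PhyloTree VH}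
    {TP : PhyloTree VP} {σ φ : VP → VH} (hφ : IsReconciliation TH TP σ φ) {u v : VP}
    (huv : TP.ParentArc u v) : Relation.ReflTransGen (GphiArc TH TP φ) (φ u) (φ v) := by
  rcases hφ.anc_or_incomp_of_parentArc huv with hdesc | hincomp
  · exact Relation.ReflTransGen.mono (fun _ _ => Or.inl) _ _ hdesc.reflTransGen_parentArc
  · exact .single (.inr ⟨u, v, ⟨huv, hincomp.2, hincomp.1⟩, .inl ⟨rfl, rfl⟩⟩)

theorem gphi_path_of_ancestor_general
    (TH : PhyloTree VH) (TP : PhyloTree VP) (σ : VP → VH)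
    (φ : VP → VH) (hφ : IsReconciliation TH TP σ φ) :
    ∀ x y : VP, TP.Anc x y →
      Relation.ReflTransGen (GphiArc TH TP φ) (φ x) (φ y) := fun _ _ hxy =>
  Relation.ReflTransGen.lift' φ (fun _ _ => hφ.reflTransGen_gphiArc_of_parentArc) _ _
    hxy.reflTransGen_parentArc

/-- For a reconciliation `φ` of `(H, P, σ)`: whenever `x` is an ancestor
of `y` in `P`, the graph `G^φ` contains a directed path from `φ x` to `φ y`. -/
theorem gphi_path_of_ancestor
    (TH : PhyloTree VH) (TP : PhyloTree VP) (σ : VP → VH)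
    (hσ : ∀ p, TP.IsLeaf p → TH.IsLeaf (σ p))
    (φ : VP → VH) (hφ : IsReconciliation TH TP σ φ) :
    ∀ x y : VP, TP.Anc x y →
      Relation.ReflTransGen (GphiArc TH TP φ) (φ x) (φ y) :=
  gphi_path_of_ancestor_general TH TP σ φ hφ
end

section
/- Let H be a phylogenetic tree, and let G be a spanning subgraph of H^+_3 such that (i) A_par ⊆ E(G), and (ii) (v,u) ∈ E(G) for every arc (u,v) ∈ E(G) \ A_par. Suppose that G contains no directed cycle of Type 1, Type 2, or Type 3. Then no directed cycle in G contains an arc from A_par. -/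
/-!
Let `u` be a vertex of minimal depth on the cycle that is entered from a child `x` of its
sibling `s`. It exists because the cycle goes down along a parent arc, and the only arcs of
`H⁺₃` that climb to a vertex from below come from its nephews. The only arcs of `H⁺₃` that
leave the set of strict descendants of a vertex `w` go from a child of `w` to the sibling of
`w`. Hence if the cycle steps from `u` to a child, it must come back through `s`, closing the
Type 2 cycle `u, ·, s, x`; a step from `u` to `s` closes the Type 1 cycle `u, s, x`; and a step
to the other child `v` of `s` followed by a step down from `v` must return through `x`, closing
the Type 3 cycle `u, v, ·, x`. Every other continuation either revisits a vertex or leaves a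
cycle of length two or three on `u` and the children of `s`, which contains no parent arc.
-/

namespace PhyloTree

variable {V : Type*} [Fintype V] [DecidableEq V] {T : PhyloTree V} {a b c u : V}

def StrictAnc (T : PhyloTree V) (a b : V) : Prop := T.Anc a b ∧ b ≠ a

noncomputable def depth (T : PhyloTree V) (v : V) : ℕ := Nat.find (T.toRoot v)

theorem Anc.refl (a : V) : T.Anc a a := ⟨0, rfl⟩

theorem Anc.trans (hab : T.Anc a b) (hbc : T.Anc b c) : T.Anc a c := by
  obtain ⟨m, rfl⟩ := hab
  obtain ⟨n, rfl⟩ := hbc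
  exact ⟨m + n, Function.iterate_add_apply _ _ _ _⟩

theorem ParentArc.anc (h : T.ParentArc a b) : T.Anc a b := ⟨1, h.1⟩

theorem depth_spec (v : V) : T.parent^[T.depth v] v = T.root := Nat.find_spec (T.toRoot v)

theorem depth_eq_depth_parent_add_one {v : V} (hv : v ≠ T.root) :
    T.depth v = T.depth (T.parent v) + 1 := by
  have hle : T.depth v ≤ T.depth (T.parent v) + 1 :=
    Nat.find_min' _ (by rw [Function.iterate_succ_apply]; exact T.depth_spec _)
  obtain ⟨k, hk⟩ : ∃ k, T.depth v = k + 1 :=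
    Nat.exists_eq_succ_of_ne_zero fun h => hv (by simpa [h] using T.depth_spec v)
  have : T.depth (T.parent v) ≤ k :=
    Nat.find_min' _ (by simpa [hk, Function.iterate_succ_apply] using T.depth_spec v)
  omega

theorem ParentArc.depth_eq (h : T.ParentArc a b) : T.depth b = T.depth a + 1 := by
  rw [depth_eq_depth_parent_add_one h.2, h.1]

theorem Sibling.symm (h : T.Sibling a b) : T.Sibling b a :=
  ⟨h.1.symm, h.2.2.1, h.2.1, h.2.2.2.symm⟩

theorem Sibling.depth_eq (h : T.Sibling a b) : T.depth a = T.depth b := by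
  rw [depth_eq_depth_parent_add_one h.2.1, depth_eq_depth_parent_add_one h.2.2.1, h.2.2.2]

theorem depth_parent_lt {v : V} (hv : v ≠ T.root) : T.depth (T.parent v) < T.depth v := by
  rw [depth_eq_depth_parent_add_one hv]
  exact Nat.lt_add_one _

theorem depth_parent_le (v : V) : T.depth (T.parent v) ≤ T.depth v := by
  by_cases hv : v = T.root
  · rw [hv, T.parent_root]
  · exact (depth_parent_lt hv).le

theorem Anc.depth_le (h : T.Anc a b) : T.depth a ≤ T.depth b := by
  obtain ⟨n, rfl⟩ := h
  induction n with
  | zero => rfl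
  | succ n ih =>
    rw [Function.iterate_succ_apply']
    exact (depth_parent_le _).trans ih

theorem strictAnc_iff : T.StrictAnc a b ↔ b ≠ T.root ∧ T.Anc a (T.parent b) := by
  constructor
  · rintro ⟨⟨_ | n, hn⟩, hba⟩
    · exact absurd hn hba
    · refine ⟨fun hb => hba ?_, n, hn⟩
      rw [← hn, hb, Function.iterate_fixed T.parent_root]
  · rintro ⟨hb, n, hn⟩
    refine ⟨⟨n + 1, hn⟩, fun hba => ?_⟩
    have := (Anc.depth_le ⟨n, hn⟩).trans_lt (depth_parent_lt hb)
    exact (hba ▸ this).false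

theorem StrictAnc.depth_lt (h : T.StrictAnc a b) : T.depth a < T.depth b := by
  obtain ⟨hb, hab⟩ := strictAnc_iff.1 h
  exact hab.depth_le.trans_lt (depth_parent_lt hb)

theorem ParentArc.strictAnc (h : T.ParentArc a b) : T.StrictAnc a b :=
  strictAnc_iff.2 ⟨h.2, h.1 ▸ Anc.refl _⟩

theorem Sibling.eq_of_sibling (hb : T.Sibling a b) (hc : T.Sibling a c) : b = c := by
  have hmem : ∀ {x}, T.Sibling a x → x ∈ Finset.univ.filter
      fun w => T.parent w = T.parent a ∧ w ≠ T.root := fun h => by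
    simp [h.2.2.1, h.2.2.2]
  have ha : a ∈ Finset.univ.filter fun w => T.parent w = T.parent a ∧ w ≠ T.root := by
    simp [hb.2.1]
  rcases T.binary (T.parent a) with h0 | h2
  · simp [Finset.card_eq_zero.1 h0] at ha
  · obtain ⟨x, y, -, hxy⟩ := Finset.card_eq_two.1 h2
    have hb' := hmem hb
    have hc' := hmem hc
    rw [hxy] at ha hb' hc'
    simp only [Finset.mem_insert, Finset.mem_singleton] at ha hb' hc'
    grind [hb.1, hc.1]

theorem reachable_parent (v : V) : T.ugraph.Reachable v (T.parent v) := by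
  by_cases hv : v = T.root
  · rw [hv, T.parent_root]
  · exact SimpleGraph.Adj.reachable (Or.inr ⟨rfl, hv⟩)

theorem reachable_parent_iterate (n : ℕ) (v : V) : T.ugraph.Reachable v (T.parent^[n] v) := by
  induction n with
  | zero => rfl
  | succ n ih => exact ih.trans (Function.iterate_succ_apply' .. ▸ reachable_parent _)

theorem ugraph_preconnected : T.ugraph.Preconnected := fun a b => by
  obtain ⟨m, hm⟩ := T.toRoot a
  obtain ⟨n, hn⟩ := T.toRoot b
  exact (hm ▸ reachable_parent_iterate m a).trans (hn ▸ reachable_parent_iterate n b).symm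

theorem anc_or_anc_or_sibling_or_nepArc_of_walk (w : T.ugraph.Walk a b) (hw : w.length ≤ 3) :
    T.Anc a b ∨ T.Anc b a ∨ T.Sibling a b ∨ T.NepArc a b := by
  rcases w with _ | @⟨_, v₁, _, h1, _ | @⟨_, v₂, _, h2, _ | ⟨h3, _ | ⟨_, w⟩⟩⟩⟩
  · exact Or.inl (Anc.refl a)
  · rcases h1 with h1 | h1
    exacts [Or.inl h1.anc, Or.inr (Or.inl h1.anc)]
  · rcases h1 with h1 | h1 <;> rcases h2 with h2 | h2
    · exact Or.inl (h1.anc.trans h2.anc)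
    · exact Or.inl (h1.1.symm.trans h2.1 ▸ Anc.refl a)
    · by_cases hab : a = b
      · exact Or.inl (hab ▸ Anc.refl a)
      · exact Or.inr (Or.inr (Or.inl ⟨hab, h1.2, h2.2, h1.1.trans h2.1.symm⟩))
    · exact Or.inr (Or.inl (h2.anc.trans h1.anc))
  · rcases h1 with h1 | h1 <;> rcases h2 with h2 | h2 <;> rcases h3 with h3 | h3
    · exact Or.inl (h1.anc.trans (h2.anc.trans h3.anc))
    · exact Or.inl (h2.1.symm.trans h3.1 ▸ h1.anc)
    · exact Or.inl (h1.1.symm.trans h2.1 ▸ h3.anc)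
    · exact Or.inr (Or.inl (h1.1.symm.trans h2.1 ▸ h3.anc))
    · by_cases ha : a = v₂
      · exact Or.inl (ha ▸ h3.anc)
      · refine Or.inr (Or.inr (Or.inr (Or.inr ⟨v₂, ?_, h3⟩)))
        exact ⟨Ne.symm ha, h2.2, h1.2, h2.1.trans h1.1.symm⟩
    · exact Or.inr (Or.inl (h2.1.symm.trans h3.1 ▸ h1.anc))
    · by_cases hb : v₁ = b
      · exact Or.inr (Or.inl (hb ▸ h1.anc))
      · refine Or.inr (Or.inr (Or.inr (Or.inl ⟨v₁, ?_, h1⟩)))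
        exact ⟨hb, h2.2, h3.2, h2.1.trans h3.1.symm⟩
    · exact Or.inr (Or.inl (h3.anc.trans (h2.anc.trans h1.anc)))
  · simp only [SimpleGraph.Walk.length_cons] at hw
    omega

theorem Anc.of_anc_parent (h : T.Anc a (T.parent b)) : T.Anc a b := h.trans ⟨1, rfl⟩

theorem HplusArc.parentArc_or_sibling_or_nepArc (h : T.HplusArc 3 a b) :
    T.ParentArc a b ∨ T.Sibling a b ∨ T.NepArc a b := by
  rcases h with h | ⟨-, hinc, hd⟩
  · exact Or.inl h
  obtain ⟨w, hw⟩ := (ugraph_preconnected a b).exists_walk_length_eq_dist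
  rcases anc_or_anc_or_sibling_or_nepArc_of_walk w (hw.trans_le hd) with h | h | h
  exacts [absurd h hinc.1, absurd h hinc.2, Or.inr h]

theorem HplusArc.parentArc_and_sibling_of_exit {d e : V} (hde : T.HplusArc 3 d e)
    (hd : T.StrictAnc u d) (he : ¬ T.StrictAnc u e) : T.ParentArc u d ∧ T.Sibling u e := by
  rw [strictAnc_iff] at hd he
  obtain ⟨-, hud⟩ := hd
  rcases hde.parentArc_or_sibling_or_nepArc with h | h | ⟨t, hte, htd⟩ | ⟨t, htd, hte⟩
  · exact absurd ⟨h.2, h.1 ▸ hud.of_anc_parent⟩ he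
  · exact absurd ⟨h.2.2.1, h.2.2.2 ▸ hud⟩ he
  · rw [htd.1] at hud
    by_cases htu : t = u
    · exact ⟨htu ▸ htd, htu ▸ hte⟩
    · obtain ⟨-, hut⟩ := strictAnc_iff.1 ⟨hud, htu⟩
      exact absurd ⟨hte.2.2.1, hte.2.2.2 ▸ hut⟩ he
  · rw [← htd.2.2.2] at hud
    exact absurd ⟨hte.2, hte.1 ▸ hud.of_anc_parent⟩ he

theorem Sibling.not_parentArc {s : V} (hus : T.Sibling u s) (ha : a = u ∨ T.ParentArc s a)
    (hb : b = u ∨ T.ParentArc s b) : ¬ T.ParentArc a b := by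
  intro hab
  have := hab.depth_eq
  have := hus.depth_eq
  rcases ha with rfl | ha <;> rcases hb with rfl | hb
  · exact T.parentArc_irrefl _ hab
  · exact hus.1 (hab.1.symm.trans hb.1)
  · have := ha.depth_eq
    omega
  · have := ha.depth_eq
    have := hb.depth_eq
    omega

end PhyloTree

theorem ZMod.exists_lt_eq_add_of_natCast_eq_zero {n d : ℕ} [NeZero n] (hd : (d : ZMod n) = 0)
    (hd0 : 0 < d) (i j : ZMod n) : ∃ t < d, i = j + t :=
  ⟨(i - j).val,
    (i - j).val_lt.trans_le (Nat.le_of_dvd hd0 ((ZMod.natCast_eq_zero_iff d n).1 hd)),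
    by rw [ZMod.natCast_zmod_val]; ring⟩

theorem ZMod.exists_mem_and_add_one_notMem {n : ℕ} [NeZero n] {S : Set (ZMod n)} {a b : ZMod n}
    (ha : a ∈ S) (hb : b ∉ S) : ∃ k ∈ S, k + 1 ∉ S := by
  by_contra! h
  have hS : ∀ t : ℕ, a + t ∈ S := by
    intro t
    induction t with
    | zero => simpa using ha
    | succ t ih =>
      rw [Nat.cast_succ, ← add_assoc]
      exact h _ ih
  obtain ⟨t, -, rfl⟩ := ZMod.exists_lt_eq_add_of_natCast_eq_zero (ZMod.natCast_self n)
    (Nat.pos_of_neZero n) b a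
  exact hb (hS t)

section Cycle

open PhyloTree

variable {V : Type*} [Fintype V] [DecidableEq V] {T : PhyloTree V} {G : V → V → Prop}
  {n : ℕ} [NeZero n] {f : ZMod n → V}

theorem exists_exit_of_cycle (hf : ∀ i, T.HplusArc 3 (f i) (f (i + 1))) {u : V} {i j : ZMod n}
    (hi : T.StrictAnc u (f i)) (hj : ¬ T.StrictAnc u (f j)) :
    ∃ k, T.ParentArc u (f k) ∧ T.Sibling u (f (k + 1)) := by
  obtain ⟨k, hk, hk1⟩ :=
    ZMod.exists_mem_and_add_one_notMem (S := {k | T.StrictAnc u (f k)}) hi hj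
  exact ⟨k, (hf k).parentArc_and_sibling_of_exit hk hk1⟩

theorem exists_peak (hf : ∀ i, T.HplusArc 3 (f i) (f (i + 1))) {i : ZMod n}
    (hi : T.ParentArc (f i) (f (i + 1))) : ∃ j s, (∀ k, T.depth (f j) ≤ T.depth (f k)) ∧
      T.Sibling (f j) s ∧ T.ParentArc s (f (j - 1)) := by
  obtain ⟨j₀, -, hj₀⟩ := Finset.exists_min_image Finset.univ (T.depth ∘ f) Finset.univ_nonempty
  have hmin : ∀ k, T.depth (f j₀) ≤ T.depth (f k) := fun k => hj₀ k (Finset.mem_univ k)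
  obtain ⟨k, hk, hk1⟩ := ZMod.exists_mem_and_add_one_notMem
    (S := {k | T.depth (f k) ≠ T.depth (f j₀)}) (a := i + 1) (b := j₀)
    (by have := hi.depth_eq; have := hmin i; simp only [Set.mem_ofPred_eq]; omega) (by simp)
  simp only [Set.mem_ofPred_eq, not_not] at hk hk1
  have := hmin k
  refine ⟨k + 1, ?_⟩
  rw [add_sub_cancel_right, hk1]
  rcases (hf k).parentArc_or_sibling_or_nepArc with h | h | ⟨s, hs, hsk⟩ | ⟨s, hs, hsk⟩
  · have := h.depth_eq
    omega
  · have := h.depth_eq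
    omega
  · exact ⟨s, hmin, hs.symm, hsk⟩
  · have := hs.depth_eq
    have := hsk.depth_eq
    omega

theorem not_parentArc_of_natCast_eq_zero {u s : V} (hus : T.Sibling u s) {d : ℕ}
    (hd : (d : ZMod n) = 0) (hd0 : 0 < d) {j : ZMod n}
    (hS : ∀ t < d, f (j + t) = u ∨ T.ParentArc s (f (j + t))) (i : ZMod n) :
    ¬ T.ParentArc (f i) (f (i + 1)) := by
  have hmem (i : ZMod n) : f i = u ∨ T.ParentArc s (f i) := by
    obtain ⟨t, ht, rfl⟩ := ZMod.exists_lt_eq_add_of_natCast_eq_zero hd hd0 i j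
    exact hS t ht
  exact hus.not_parentArc (hmem i) (hmem (i + 1))

theorem false_of_peak_of_succ_nephew (hf : IsDicycle G f)
    (hsub : ∀ a b, G a b → T.HplusArc 3 a b) (hpar : ∀ a b, T.ParentArc a b → G a b)
    (h3 : NoType3 T G) {i j : ZMod n} {s : V} (hi : T.ParentArc (f i) (f (i + 1)))
    (hus : T.Sibling (f j) s) (hx : T.ParentArc s (f (j - 1)))
    (hv : T.ParentArc s (f (j + 1))) : False := by
  obtain ⟨-, hinj, hG⟩ := hf
  have hshort i := hsub _ _ (hG i)
  have hxu : G (f (j - 1)) (f j) := by simpa using hG (j - 1)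
  have hdepth := hus.depth_eq
  have hv_depth := hv.depth_eq
  by_cases hvx : f (j + 1) = f (j - 1)
  · have h2 : ((2 : ℕ) : ZMod n) = 0 := by
      have := hinj hvx
      push_cast
      linear_combination this
    refine not_parentArc_of_natCast_eq_zero hus h2 two_pos (j := j) (fun t ht => ?_) i hi
    interval_cases t
    · simp
    · simpa using Or.inr hv
  have hvx' : T.Sibling (f (j + 1)) (f (j - 1)) := ⟨hvx, hv.2, hx.2, hv.1.trans hx.1.symm⟩
  have hv2 := hshort (j + 1)
  rw [add_assoc, one_add_one_eq_two] at hv2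
  rcases hv2.parentArc_or_sibling_or_nepArc with h | h | ⟨t, ht, htv⟩ | ⟨t, ht, htv⟩
  · obtain ⟨k, hvk, hk⟩ := exists_exit_of_cycle hshort h.strictAnc (j := j)
      fun h' => by have := h'.depth_lt; omega
    exact h3 ⟨f j, s, f (j + 1), f (j - 1), f k, hus, hvx, hv, hx, hvk, hG j, hpar _ _ hvk,
      hvx'.eq_of_sibling hk ▸ hG k, hxu⟩
  · have h3z : ((3 : ℕ) : ZMod n) = 0 := by
      have := hinj (hvx'.eq_of_sibling h)
      push_cast
      linear_combination -this
    refine not_parentArc_of_natCast_eq_zero hus h3z three_pos (j := j) (fun t ht => ?_) i hi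
    interval_cases t
    · simp
    · simpa using Or.inr hv
    · simpa [← hvx'.eq_of_sibling h] using Or.inr hx
  · have hju : f j = f (j + 2) := hus.symm.eq_of_sibling (htv.1.symm.trans hv.1 ▸ ht)
    have := hinj hju
    exact hvx (congrArg f (by linear_combination -this))
  · -- the cycle enters the subtree below `x`, and could only leave it through `v` again
    have htx : t = f (j - 1) := (hvx'.eq_of_sibling ht.symm).symm
    obtain ⟨k, hxk, hk⟩ := exists_exit_of_cycle hshort (htx ▸ htv).strictAnc (j := j)
      fun h' => by have := h'.depth_lt; have := hx.depth_eq; omega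
    have hkj : k = j := add_right_cancel (hinj (hvx'.symm.eq_of_sibling hk)).symm
    have hxk_depth := hxk.depth_eq
    have := hx.depth_eq
    rw [hkj] at hxk_depth
    omega

theorem false_of_peak (hf : IsDicycle G f) (hsub : ∀ a b, G a b → T.HplusArc 3 a b)
    (hpar : ∀ a b, T.ParentArc a b → G a b) (h1 : NoType1 T G) (h2 : NoType2 T G)
    (h3 : NoType3 T G) {i j : ZMod n} {s : V} (hi : T.ParentArc (f i) (f (i + 1)))
    (hmin : ∀ k, T.depth (f j) ≤ T.depth (f k)) (hus : T.Sibling (f j) s)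
    (hx : T.ParentArc s (f (j - 1))) : False := by
  have hshort i := hsub _ _ (hf.2.2 i)
  have hxu : G (f (j - 1)) (f j) := by simpa using hf.2.2 (j - 1)
  rcases (hshort j).parentArc_or_sibling_or_nepArc with
    h | h | ⟨t, ht, htu⟩ | ⟨t, ht, htv⟩
  · obtain ⟨k, huk, hk⟩ := exists_exit_of_cycle hshort h.strictAnc (j := j) fun h' => h'.2 rfl
    exact h2 ⟨f j, f k, s, f (j - 1), hus, huk, hx, hpar _ _ huk,
      hus.eq_of_sibling hk ▸ hf.2.2 k, hpar _ _ hx, hxu⟩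
  · exact h1 ⟨f j, s, f (j - 1), hus, hx, hus.eq_of_sibling h ▸ hf.2.2 j, hpar _ _ hx, hxu⟩
  · have := hmin (j + 1)
    have := ht.depth_eq
    have := htu.depth_eq
    omega
  · exact false_of_peak_of_succ_nephew hf hsub hpar h3 hi hus hx
      (hus.eq_of_sibling ht.symm ▸ htv)

end Cycle

variable {V : Type*} [Fintype V] [DecidableEq V]

theorem no_long_without_short_dist3_general
    (T : PhyloTree V) (G : V → V → Prop)
    (hsub : ∀ a b, G a b → T.HplusArc 3 a b)
    (hpar : ∀ a b, T.ParentArc a b → G a b)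
    (h1 : NoType1 T G) (h2 : NoType2 T G) (h3 : NoType3 T G) :
    ¬ ∃ (n : ℕ) (f : ZMod n → V),
        IsDicycle G f ∧ ∃ i, T.ParentArc (f i) (f (i + 1)) := by
  rintro ⟨n, f, hf, i, hi⟩
  have : NeZero n := ⟨by have := hf.1; omega⟩
  obtain ⟨j, s, hmin, hus, hx⟩ := exists_peak (fun k => hsub _ _ (hf.2.2 k)) hi
  exact false_of_peak hf hsub hpar h1 h2 h3 hi hmin hus hx

/-- Let `G` be a spanning subgraph of `H⁺₃` containing all arcs of
`A_par` and containing, together with each arc not in `A_par`, its reverse. If `G`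
contains no cycle of Type 1, 2 or 3, then no directed cycle of `G` contains an arc of
`A_par`. -/
theorem no_long_without_short_dist3
    (T : PhyloTree V) (G : V → V → Prop)
    (hsub : ∀ a b, G a b → T.HplusArc 3 a b)
    (hpar : ∀ a b, T.ParentArc a b → G a b)
    (hrev : ∀ a b, G a b → ¬ T.ParentArc a b → G b a)
    (h1 : NoType1 T G) (h2 : NoType2 T G) (h3 : NoType3 T G) :
    ¬ ∃ (n : ℕ) (f : ZMod n → V),
        IsDicycle G f ∧ ∃ i, T.ParentArc (f i) (f (i + 1)) :=
  no_long_without_short_dist3_general T G hsub hpar h1 h2 h3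
end

section
/- Let H be a phylogenetic tree and let G be a directed graph on the vertices of H with A_par ⊆ E(G). Let C be a directed cycle in G of minimum length among all directed cycles of G containing at least one arc from A_par. If a vertex b and its parent a (in H) both lie on C, then the arc (a,b) is an arc of C. -/
/-!
Following `C` from `b` round to its parent `a` and closing up with the tree arc `(a, b)`
gives a cycle of `G` through a parent arc; it is strictly shorter than `C` unless the walk
from `b` to `a` is all of `C` but one arc, and that last arc is then `(a, b)`.
-/

/-- `g` is the stretch `f j, f (j + 1), …, f (j + d)` of the cycle `f`. -/
theorem IsDicycle.exists_shortcut {α : Type*} {G : α → α → Prop} {n : ℕ} {f : ZMod n → α}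
    (hC : IsDicycle G f) (j : ZMod n) {d : ℕ} (hd0 : 0 < d) (hdn : d < n)
    (hback : G (f (j + d)) (f j)) :
    ∃ g : ZMod (d + 1) → α, IsDicycle G g ∧ g d = f (j + d) ∧ g (d + 1) = f j := by
  have : NeZero n := ⟨by omega⟩
  have hlast : ((d : ZMod (d + 1)) + 1) = 0 := ZMod.natCast_self' d
  have hval_d : (d : ZMod (d + 1)).val = d := ZMod.val_cast_of_lt d.lt_succ_self
  refine ⟨fun k => f (j + (k.val : ZMod n)), ⟨by omega, ?_, ?_⟩, by simp only [hval_d], ?_⟩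
  · intro k k' hkk'
    have hcast : (k.val : ZMod n) = k'.val := add_left_cancel (hC.2.1 hkk')
    apply ZMod.val_injective
    rw [← ZMod.val_cast_of_lt (k.val_lt.trans_le hdn), ← ZMod.val_cast_of_lt
      (n := n) (k'.val_lt.trans_le hdn), hcast]
  · intro k
    rcases (Nat.lt_succ_iff.mp k.val_lt).lt_or_eq with hk | hk
    · have hsucc : (k + 1).val = k.val + 1 := by
        rw [← ZMod.val_cast_of_lt (Nat.add_lt_add_right hk 1), Nat.cast_add_one,
          ZMod.natCast_zmod_val]
      simpa only [hsucc, Nat.cast_succ, add_assoc] using hC.2.2 (j + k.val)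
    · have hk' : k = d := by rw [← ZMod.natCast_zmod_val k, hk]
      simpa only [hk', hlast, hval_d, ZMod.val_zero, Nat.cast_zero, add_zero] using hback
  · simp only [hlast, ZMod.val_zero, Nat.cast_zero, add_zero]

variable {V : Type*} [Fintype V] [DecidableEq V]

theorem parent_on_min_cycle_arc_general
    (T : PhyloTree V) (G : V → V → Prop)
    (hpar : ∀ a b, T.ParentArc a b → G a b)
    (n : ℕ) (f : ZMod n → V) (hC : IsDicycle G f)
    (hmin : ∀ (m : ℕ) (g : ZMod m → V), IsDicycle G g →
      (∃ j, T.ParentArc (g j) (g (j + 1))) → n ≤ m)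
    (a b : V) (hab : T.ParentArc a b)
    (ha : a ∈ Set.range f) (hb : b ∈ Set.range f) :
    ∃ i, f i = a ∧ f (i + 1) = b := by
  obtain ⟨i, rfl⟩ := ha
  obtain ⟨j, rfl⟩ := hb
  have : NeZero n := ⟨by have := hC.1; omega⟩
  by_contra hnot
  set d := (i - j).val
  have hjd : j + d = i := by rw [ZMod.natCast_zmod_val, add_sub_cancel]
  have hd0 : 0 < d := Nat.pos_of_ne_zero fun h0 =>
    T.parentArc_irrefl _ (by rwa [← hjd, h0, Nat.cast_zero, add_zero] at hab)
  have hd_lt : d + 1 < n := by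
    refine lt_of_le_of_ne (ZMod.val_lt _) fun hn => hnot ⟨i, rfl, ?_⟩
    rw [← hjd, add_assoc, ← Nat.cast_add_one, hn, ZMod.natCast_self, add_zero]
  obtain ⟨g, hg, hg_d, hg_succ⟩ := hC.exists_shortcut j hd0 (by omega) (hjd ▸ hpar _ _ hab)
  have := hmin (d + 1) g hg ⟨d, by rwa [hg_d, hg_succ, hjd]⟩
  omega

/-- Let `G` be a digraph on the vertices of `H` with `A_par ⊆ E(G)`, and
let `C` (given by `f : ZMod n → V`) be a directed cycle of `G` of minimum length among
those containing an arc of `A_par`. If a vertex `b` and its parent `a` both lie on `C`,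
then `(a,b)` is an arc of `C`. -/
theorem parent_on_min_cycle_arc
    (T : PhyloTree V) (G : V → V → Prop)
    (hpar : ∀ a b, T.ParentArc a b → G a b)
    (n : ℕ) (f : ZMod n → V) (hC : IsDicycle G f)
    (hCpar : ∃ i, T.ParentArc (f i) (f (i + 1)))
    (hmin : ∀ (m : ℕ) (g : ZMod m → V), IsDicycle G g →
      (∃ j, T.ParentArc (g j) (g (j + 1))) → n ≤ m)
    (a b : V) (hab : T.ParentArc a b)
    (ha : a ∈ Set.range f) (hb : b ∈ Set.range f) :
    ∃ i, f i = a ∧ f (i + 1) = b :=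
  parent_on_min_cycle_arc_general T G hpar n f hC hmin a b hab ha hb
end
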